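/- arXiv:1204.3083 — 7 statements merged into one kernel-verified Lean document; each statement's English description precedes it below -/
import Mathlib

section
/- Let C be a finite split category and let e ∈ End_C(X) and f ∈ End_C(Y) be idempotents. Then e and f are equivalent if and only if J(e) = J(f), i.e., if and only if Mor(C)∘e∘Mor(C) = Mor(C)∘f∘Mor(C). -/
open CategoryTheory

/-- The set of all morphisms of a category `C`, as a sigma type. -/
def Mor (C : Type*) [Category C] : Type _ := Σ (X Y : C), X ⟶ Y

/-- For a morphism `s : X ⟶ Y`, the set `Mor(C)∘s∘Mor(C) = { v∘s∘u }` of all morphisms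
factoring through `s` (in Lean's composition order: `u ≫ s ≫ v`). -/
def Jset {C : Type*} [Category C] {X Y : C} (s : X ⟶ Y) : Set (Mor C) :=
  { m | ∃ (W Z : C) (u : W ⟶ X) (v : Y ⟶ Z), m = ⟨W, Z, u ≫ s ≫ v⟩ }

/-- Equivalence of idempotents `e ∈ End(X)` and `f ∈ End(Y)`: there exist
`a : Y ⟶ X` with `a = e∘a∘f` (Lean: `a = f ≫ a ≫ e`) and `b : X ⟶ Y` with
`b = f∘b∘e` (Lean: `b = e ≫ b ≫ f`) such that `e = a∘b` (Lean: `e = b ≫ a`)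
and `f = b∘a` (Lean: `f = a ≫ b`). -/
def IdemEquiv {C : Type*} [Category C] {X Y : C} (e : X ⟶ X) (f : Y ⟶ Y) : Prop :=
  ∃ (a : Y ⟶ X) (b : X ⟶ Y),
    a = f ≫ a ≫ e ∧ b = e ≫ b ≫ f ∧ e = b ≫ a ∧ f = a ≫ b

/-!
Equivalent idempotents are exactly isomorphic objects of the Karoubi envelope, and
`Jset e ⊆ Jset f` says exactly that `(X, e)` is a retract of `(Y, f)` there. So the theorem
reduces to: two objects that are retracts of each other are isomorphic as soon as one of them
has a finite endomorphism monoid. Indeed, composing the two retractions gives a one-sided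
inverse in that monoid, which is then two-sided since finite monoids are Dedekind-finite.
-/

open CategoryTheory.Idempotents

namespace CategoryTheory

lemma nonempty_iso_iff_mutual_retracts {D : Type*} [Category D] {A B : D} [Finite (B ⟶ B)] :
    Nonempty (A ≅ B) ↔ Nonempty (Retract A B) ∧ Nonempty (Retract B A) := by
  refine ⟨fun ⟨i⟩ => ⟨⟨Retract.ofIso i⟩, ⟨Retract.ofIso i.symm⟩⟩, ?_⟩
  rintro ⟨⟨h₁⟩, ⟨h₂⟩⟩
  have : Finite (End B) := ‹Finite (B ⟶ B)›
  have hr : (h₁.r ≫ h₂.r) ≫ h₂.i ≫ h₁.i = 𝟙 B :=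
    mul_eq_one_symm (M := End B) (a := h₁.r ≫ h₂.r) (b := h₂.i ≫ h₁.i)
      (by simp [End.mul_def, End.one_def])
  have hi : h₂.r ≫ h₂.i ≫ h₁.i = h₁.i := by
    simpa using congrArg (h₁.i ≫ ·) hr
  exact ⟨⟨h₁.i, h₁.r, h₁.retract, by rw [← hi]; simpa using hr⟩⟩

namespace Idempotents.Karoubi

instance {C : Type*} [Category C] {P Q : Karoubi C} [Finite (P.X ⟶ Q.X)] : Finite (P ⟶ Q) :=
  Finite.of_injective Hom.f fun _ _ => hom_ext _ _

end Idempotents.Karoubi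

end CategoryTheory

section

variable {C : Type*} [Category C]

lemma idemEquiv_iff_nonempty_iso_karoubi {X Y : C} {e : X ⟶ X} {f : Y ⟶ Y}
    (he : e ≫ e = e) (hf : f ≫ f = f) :
    IdemEquiv e f ↔ Nonempty (Karoubi.mk X e he ≅ Karoubi.mk Y f hf) := by
  constructor
  · rintro ⟨a, b, ha, hb, hba, hab⟩
    exact ⟨⟨⟨b, hb.symm⟩, ⟨a, ha.symm⟩, Karoubi.hom_ext _ _ hba.symm,
      Karoubi.hom_ext _ _ hab.symm⟩⟩
  · rintro ⟨i⟩
    exact ⟨i.inv.f, i.hom.f, i.inv.comm.symm, i.hom.comm.symm,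
      (congrArg Karoubi.Hom.f i.hom_inv_id).symm, (congrArg Karoubi.Hom.f i.inv_hom_id).symm⟩

lemma mem_Jset_iff {X Y X' Y' : C} {s : X ⟶ Y} {t : X' ⟶ Y'} :
    (⟨X, Y, s⟩ : Mor C) ∈ Jset t ↔ ∃ (u : X ⟶ X') (v : Y' ⟶ Y), s = u ≫ t ≫ v := by
  constructor
  · rintro ⟨W, Z, u, v, h⟩
    obtain ⟨rfl, h⟩ := Sigma.mk.inj_iff.mp h
    obtain ⟨rfl, h⟩ := Sigma.mk.inj_iff.mp (eq_of_heq h)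
    exact ⟨u, v, eq_of_heq h⟩
  · rintro ⟨u, v, rfl⟩
    exact ⟨X, Y, u, v, rfl⟩

lemma Jset_subset_iff {X Y X' Y' : C} {s : X ⟶ Y} {t : X' ⟶ Y'} :
    Jset s ⊆ Jset t ↔ ∃ (u : X ⟶ X') (v : Y' ⟶ Y), s = u ≫ t ≫ v := by
  rw [← mem_Jset_iff]
  refine ⟨fun h => h ⟨X, Y, 𝟙 X, 𝟙 Y, by rw [Category.id_comp, Category.comp_id]⟩, ?_⟩
  rintro hs _ ⟨W, Z, u', v', rfl⟩
  obtain ⟨u, v, rfl⟩ := mem_Jset_iff.mp hs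
  exact mem_Jset_iff.mpr ⟨u' ≫ u, v ≫ v', by simp⟩

lemma Jset_subset_iff_nonempty_retract {X Y : C} {e : X ⟶ X} {f : Y ⟶ Y}
    (he : e ≫ e = e) (hf : f ≫ f = f) :
    Jset e ⊆ Jset f ↔ Nonempty (Retract (Karoubi.mk X e he) (Karoubi.mk Y f hf)) := by
  rw [Jset_subset_iff]
  constructor
  · rintro ⟨u, v, h⟩
    refine ⟨⟨⟨e ≫ u ≫ f, by simp [reassoc_of% he, hf]⟩,
      ⟨f ≫ v ≫ e, by simp [reassoc_of% hf, he]⟩, Karoubi.hom_ext _ _ ?_⟩⟩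
    simp [reassoc_of% hf, ← reassoc_of% h, he]
  · rintro ⟨r⟩
    have h := congrArg Karoubi.Hom.f r.retract
    rw [Karoubi.comp_f, Karoubi.id_f, ← Karoubi.comp_p r.i] at h
    exact ⟨r.i.f, r.r.f, by simpa using h.symm⟩

end

/-- In a finite split category, idempotents `e` and `f` are equivalent
if and only if `J(e) = J(f)`, i.e. `Mor(C)∘e∘Mor(C) = Mor(C)∘f∘Mor(C)`. -/
theorem statement4 {C : Type*} [Category C] [Finite C]
    [∀ X Y : C, Finite (X ⟶ Y)]
    (hsplit : ∀ {X Y : C} (s : X ⟶ Y), ∃ t : Y ⟶ X, s ≫ t ≫ s = s)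
    {X Y : C} (e : X ⟶ X) (f : Y ⟶ Y) (he : e ≫ e = e) (hf : f ≫ f = f) :
    IdemEquiv e f ↔ Jset e = Jset f := by
  rw [idemEquiv_iff_nonempty_iso_karoubi he hf, nonempty_iso_iff_mutual_retracts,
    ← Jset_subset_iff_nonempty_retract, ← Jset_subset_iff_nonempty_retract,
    Set.Subset.antisymm_iff]
end

section
/- Let C be a finite split category and let s, t be morphisms of C lying in the same J-class (i.e., Mor(C)∘s∘Mor(C) = Mor(C)∘t∘Mor(C)). If Mor(C)∘s ⊆ Mor(C)∘t, then Mor(C)∘s = Mor(C)∘t. -/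
/-!
From `Mor(C)∘s ⊆ Mor(C)∘t` we get `s = t ≫ v`, and from the equality of `J`-classes
`t = u ≫ s ≫ w`, so `t = u ≫ t ≫ c` with `c = v ≫ w`. Iterating, `t = uⁿ ≫ t ≫ cⁿ` for all `n`.
The powers of `c` in the finite monoid `End Y'` repeat, `cᵐ = cⁿ` with `m < n`, hence
`t ≫ cⁿ⁻ᵐ = t` and `t = s ≫ w ≫ cⁿ⁻ᵐ⁻¹` lies in `Mor(C)∘s`.
-/

open CategoryTheory

/-- For a morphism `s : X ⟶ Y`, the set `Mor(C)∘s := { v∘s | v : Y ⟶ Z }` (in Lean's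
composition order: `s ≫ v`). -/
def Lset {C : Type*} [Category C] {X Y : C} (s : X ⟶ Y) : Set (Mor C) :=
  { m | ∃ (Z : C) (v : Y ⟶ Z), m = ⟨X, Z, s ≫ v⟩ }

section

variable {C : Type*} [Category C]

section Ideals

variable {X Y X' Y' : C}

theorem self_mem_Lset (s : X ⟶ Y) : (⟨X, Y, s⟩ : Mor C) ∈ Lset s :=
  ⟨Y, 𝟙 Y, by rw [Category.comp_id]⟩

theorem self_mem_Jset (s : X ⟶ Y) : (⟨X, Y, s⟩ : Mor C) ∈ Jset s :=
  ⟨X, Y, 𝟙 X, 𝟙 Y, by rw [Category.id_comp, Category.comp_id]⟩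

theorem source_eq_of_mem_Lset {s : X ⟶ Y} {t : X' ⟶ Y'}
    (h : (⟨X, Y, s⟩ : Mor C) ∈ Lset t) : X = X' := by
  obtain ⟨_, _, h⟩ := h
  exact congrArg Sigma.fst h

theorem mk_mem_Lset_iff (s : X ⟶ Y) (t : X ⟶ Y') :
    (⟨X, Y, s⟩ : Mor C) ∈ Lset t ↔ ∃ v : Y' ⟶ Y, s = t ≫ v := by
  constructor
  · rintro ⟨Z, v, h⟩
    obtain ⟨-, h⟩ := Sigma.mk.inj_iff.mp h
    obtain ⟨rfl, h⟩ := Sigma.mk.inj_iff.mp (eq_of_heq h)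
    exact ⟨v, eq_of_heq h⟩
  · rintro ⟨v, rfl⟩
    exact ⟨Y, v, rfl⟩

theorem mk_mem_Jset_iff (s : X ⟶ Y) (t : X' ⟶ Y') :
    (⟨X, Y, s⟩ : Mor C) ∈ Jset t ↔ ∃ (u : X ⟶ X') (v : Y' ⟶ Y), s = u ≫ t ≫ v := by
  constructor
  · rintro ⟨W, Z, u, v, h⟩
    obtain ⟨rfl, h⟩ := Sigma.mk.inj_iff.mp h
    obtain ⟨rfl, h⟩ := Sigma.mk.inj_iff.mp (eq_of_heq h)
    exact ⟨u, v, eq_of_heq h⟩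
  · rintro ⟨u, v, rfl⟩
    exact ⟨X, Y, u, v, rfl⟩

theorem Lset_subset_of_eq_comp {s : X ⟶ Y} {t : X ⟶ Y'} {x : Y' ⟶ Y} (h : s = t ≫ x) :
    Lset s ⊆ Lset t := by
  rintro _ ⟨Z, z, rfl⟩
  exact ⟨Z, x ≫ z, by rw [h, Category.assoc]⟩

end Ideals

section Stable

variable {X Y : C} {t : X ⟶ Y} {u : End X} {c : End Y}

theorem eq_pow_comp_comp_pow (h : t = u ≫ t ≫ c) (n : ℕ) : t = (u ^ n) ≫ t ≫ (c ^ n) := by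
  induction n with
  | zero => rw [pow_zero, pow_zero, End.one_def, End.one_def, Category.id_comp, Category.comp_id]
  | succ n ih =>
    conv_lhs => rw [h, ih]
    rw [pow_succ, pow_succ', End.mul_def, End.mul_def]
    simp only [Category.assoc]

theorem comp_pow_sub_eq_self_of_pow_eq (h : t = u ≫ t ≫ c) {m n : ℕ} (hmn : m ≤ n)
    (hc : c ^ m = c ^ n) : t ≫ c ^ (n - m) = t := by
  have hm := eq_pow_comp_comp_pow h m
  calc t ≫ c ^ (n - m) = (u ^ m) ≫ t ≫ ((c ^ m) ≫ c ^ (n - m)) := by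
        conv_lhs => rw [hm]
        simp only [Category.assoc]
    _ = (u ^ m) ≫ t ≫ (c ^ m) := by
        rw [← End.mul_def, pow_sub_mul_pow c hmn, ← hc]
    _ = t := hm.symm

theorem exists_comp_pow_eq_self [Finite (Y ⟶ Y)] (h : t = u ≫ t ≫ c) :
    ∃ k, 0 < k ∧ t ≫ c ^ k = t := by
  have : Finite (End Y) := inferInstanceAs (Finite (Y ⟶ Y))
  obtain ⟨m, n, hne, hc⟩ := Finite.exists_ne_map_eq_of_infinite (fun k : ℕ => c ^ k)
  rcases Nat.lt_or_gt_of_ne hne with hmn | hnm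
  · exact ⟨n - m, by omega, comp_pow_sub_eq_self_of_pow_eq h hmn.le hc⟩
  · exact ⟨m - n, by omega, comp_pow_sub_eq_self_of_pow_eq h hnm.le hc.symm⟩

theorem exists_eq_comp_comp_of_eq_comp_comp_comp [Finite (Y ⟶ Y)] {Z : C} {v : Y ⟶ Z}
    {w : Z ⟶ Y} (h : t = u ≫ t ≫ v ≫ w) : ∃ x : Z ⟶ Y, t = (t ≫ v) ≫ x := by
  obtain ⟨k, hk, hck⟩ := exists_comp_pow_eq_self (c := v ≫ w) h
  obtain ⟨j, rfl⟩ : ∃ j, k = j + 1 := ⟨k - 1, by omega⟩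
  refine ⟨w ≫ End.of (v ≫ w) ^ j, ?_⟩
  rw [pow_succ, End.mul_def] at hck
  simpa only [Category.assoc, eq_comm] using hck

end Stable

end

/-- In a finite split category, if `s` and `t` lie in the same
`J`-class (`Mor(C)∘s∘Mor(C) = Mor(C)∘t∘Mor(C)`) and `Mor(C)∘s ⊆ Mor(C)∘t`, then
`Mor(C)∘s = Mor(C)∘t`. -/
theorem statement7 {C : Type*} [Category C] [Finite C]
    [∀ X Y : C, Finite (X ⟶ Y)]
    (hsplit : ∀ {X Y : C} (s : X ⟶ Y), ∃ t : Y ⟶ X, s ≫ t ≫ s = s)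
    {X Y X' Y' : C} (s : X ⟶ Y) (t : X' ⟶ Y')
    (hJ : Jset s = Jset t) (hle : Lset s ⊆ Lset t) :
    Lset s = Lset t := by
  obtain rfl := source_eq_of_mem_Lset (hle (self_mem_Lset s))
  obtain ⟨v, rfl⟩ := (mk_mem_Lset_iff s t).1 (hle (self_mem_Lset s))
  obtain ⟨u, w, htuw⟩ := (mk_mem_Jset_iff t (t ≫ v)).1 (hJ ▸ self_mem_Jset t)
  obtain ⟨x, htx⟩ := exists_eq_comp_comp_of_eq_comp_comp_comp (u := u)
    (by simpa only [Category.assoc] using htuw)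
  exact hle.antisymm (Lset_subset_of_eq_comp htx)
end

section
/- Let C be a finite split category and let s, t be morphisms of C lying in the same J-class I (i.e., I = J(s) = J(t)). Then the sets (Mor(C)∘s) ∩ I and (Mor(C)∘t) ∩ I are either equal or disjoint. -/
open CategoryTheory

/-- `Mor(C)∘m∘Mor(C)` for a bundled morphism `m`. -/
def JsetM {C : Type*} [Category C] (m : Mor C) : Set (Mor C) := Jset m.2.2

/-- The `J`-class of a morphism `s : X ⟶ Y`: the set of all morphisms `x` with
`Mor(C)∘x∘Mor(C) = Mor(C)∘s∘Mor(C)`. -/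
def JClass {C : Type*} [Category C] {X Y : C} (s : X ⟶ Y) : Set (Mor C) :=
  { x | JsetM x = Jset s }

/-!
If `s ≫ v` is `J`-equivalent to `s`, then `s = u ≫ s ≫ v ≫ w` for some `u`, `w`, hence
`s = uⁿ ≫ s ≫ (v ≫ w)ⁿ` for all `n`. In the finite monoid `End X` some power `uⁿ` (`n ≠ 0`) is
idempotent, which forces `uⁿ ≫ s = s` and so `s = s ≫ (v ≫ w)ⁿ`: `s` factors through `s ≫ v`, and
`Mor(C)∘s = Mor(C)∘(s ≫ v)`. Thus any common element of `(Mor(C)∘s) ∩ I` and `(Mor(C)∘t) ∩ I`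
has the same `Mor(C)∘-` set as both `s` and `t`.
-/

theorem exists_isIdempotentElem_pow {M : Type*} [Monoid M] [Finite M] (a : M) :
    ∃ n ≠ 0, IsIdempotentElem (a ^ n) := by
  obtain ⟨i, j, hne, hij⟩ := Finite.exists_ne_map_eq_of_infinite (a ^ · : ℕ → M)
  wlog hlt : i < j generalizing i j
  · exact this j i hne.symm hij.symm (by omega)
  obtain ⟨d, rfl⟩ := Nat.exists_eq_add_of_lt hlt
  have hperiod : ∀ k, a ^ (i + k * (d + 1)) = a ^ i := by
    intro k
    induction k with
    | zero => simp
    | succ k ih =>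
      rw [add_mul, one_mul, ← add_assoc, pow_add, ih, ← pow_add]
      exact hij.symm
  -- a multiple of the period `d + 1` that is at least the preperiod `i`
  refine ⟨(i + 1) * (d + 1), by positivity, ?_⟩
  obtain ⟨r, hr⟩ : ∃ r, (i + 1) * (d + 1) = i + r := ⟨i * d + d + 1, by ring⟩
  calc a ^ ((i + 1) * (d + 1)) * a ^ ((i + 1) * (d + 1))
      = a ^ r * a ^ (i + (i + 1) * (d + 1)) := by rw [← pow_add, ← pow_add, hr]; ring_nf
    _ = a ^ ((i + 1) * (d + 1)) := by rw [hperiod, ← pow_add, hr, add_comm]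

section

variable {C : Type*} [Category C]

lemma mem_Jset_self {X Y : C} (s : X ⟶ Y) : (⟨X, Y, s⟩ : Mor C) ∈ Jset s :=
  ⟨X, Y, 𝟙 X, 𝟙 Y, by rw [Category.id_comp, Category.comp_id]⟩

lemma pow_comp_comp_pow_eq_self {X Y : C} {s : X ⟶ Y} {u : End X} {c : End Y}
    (h : u ≫ s ≫ c = s) (n : ℕ) : (u ^ n) ≫ s ≫ (c ^ n) = s := by
  induction n with
  | zero => simp [End.one_def]
  | succ n ih =>
    rw [pow_succ, pow_succ', End.mul_def, End.mul_def]
    simp only [Category.assoc, reassoc_of% ih, h]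

lemma exists_comp_pow_eq_self_s8 {X Y : C} [Finite (X ⟶ X)] {s : X ⟶ Y} {u : End X} {c : End Y}
    (h : u ≫ s ≫ c = s) : ∃ n ≠ 0, s ≫ (c ^ n) = s := by
  have : Finite (End X) := ‹Finite (X ⟶ X)›
  obtain ⟨n, hn, hidem⟩ := exists_isIdempotentElem_pow u
  have hs := pow_comp_comp_pow_eq_self h n
  have hus : (u ^ n) ≫ s = s :=
    calc (u ^ n) ≫ s = (u ^ n * u ^ n) ≫ s ≫ (c ^ n) := by rw [End.mul_def, Category.assoc, hs]
      _ = s := by rw [hidem.eq, hs]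
  exact ⟨n, hn, by simpa only [reassoc_of% hus] using hs⟩

lemma exists_comp_comp_eq_self_of_mem_Jset_comp {X Y Z : C} [Finite (X ⟶ X)] {s : X ⟶ Y}
    {v : Y ⟶ Z} (h : (⟨X, Y, s⟩ : Mor C) ∈ Jset (s ≫ v)) : ∃ w : Z ⟶ Y, s ≫ v ≫ w = s := by
  obtain ⟨W, Z', u, w, h⟩ := h
  obtain ⟨rfl, h⟩ := Sigma.mk.inj h
  obtain ⟨rfl, h⟩ := Sigma.mk.inj (eq_of_heq h)
  obtain ⟨n, hn, hc⟩ :=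
    exists_comp_pow_eq_self_s8 (u := u) (c := End.of (v ≫ w)) (by simpa using (eq_of_heq h).symm)
  obtain ⟨m, rfl⟩ := Nat.exists_eq_succ_of_ne_zero hn
  refine ⟨w ≫ End.of (v ≫ w) ^ m, ?_⟩
  rwa [pow_succ, End.mul_def, Category.assoc] at hc

lemma Lset_comp_eq_of_comp_comp_eq_self {X Y Z : C} {s : X ⟶ Y} {v : Y ⟶ Z} {w : Z ⟶ Y}
    (h : s ≫ v ≫ w = s) : Lset (s ≫ v) = Lset s := by
  ext m
  constructor
  · rintro ⟨Z', x, rfl⟩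
    exact ⟨Z', v ≫ x, by rw [Category.assoc]⟩
  · rintro ⟨Z', x, rfl⟩
    exact ⟨Z', w ≫ x, by rw [Category.assoc, reassoc_of% h]⟩

lemma Lset_eq_of_mem_Lset_of_mem_JClass {X Y : C} [Finite (X ⟶ X)] {s : X ⟶ Y} {m : Mor C}
    (hL : m ∈ Lset s) (hJ : m ∈ JClass s) : Lset s = Lset m.2.2 := by
  obtain ⟨Z, v, rfl⟩ := hL
  have hJ : Jset (s ≫ v) = Jset s := hJ
  obtain ⟨w, hw⟩ := exists_comp_comp_eq_self_of_mem_Jset_comp (hJ ▸ mem_Jset_self s)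
  exact (Lset_comp_eq_of_comp_comp_eq_self hw).symm

end

/-- In a finite split category, if `s` and `t` lie in the same
`J`-class `I = J(s) = J(t)`, then `(Mor(C)∘s) ∩ I` and `(Mor(C)∘t) ∩ I` are either
equal or disjoint. -/
theorem statement8 {C : Type*} [Category C] [Finite C]
    [∀ X Y : C, Finite (X ⟶ Y)]
    (hsplit : ∀ {X Y : C} (s : X ⟶ Y), ∃ t : Y ⟶ X, s ≫ t ≫ s = s)
    {X Y X' Y' : C} (s : X ⟶ Y) (t : X' ⟶ Y')
    {I : Set (Mor C)} (hIs : I = JClass s) (hIt : I = JClass t) :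
    Lset s ∩ I = Lset t ∩ I ∨ Disjoint (Lset s ∩ I) (Lset t ∩ I) := by
  refine or_iff_not_imp_right.mpr fun hnd => ?_
  obtain ⟨m, ⟨hms, hmI⟩, hmt, -⟩ := Set.not_disjoint_iff.mp hnd
  rw [Lset_eq_of_mem_Lset_of_mem_JClass hms (hIs ▸ hmI),
    Lset_eq_of_mem_Lset_of_mem_JClass hmt (hIt ▸ hmI)]
end

section
/- Let C be a finite split category, let e ∈ End_C(X) be an idempotent, and set J_e := { a ∈ e∘End_C(X)∘e : J(a) ≠ J(e) }. Then { x ∈ Mor(C)∘e : J(x) ≠ J(e) } = Mor(C)∘J_e, where Mor(C)∘J_e = { v∘a | a ∈ J_e, v a morphism with domain X }. -/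
open CategoryTheory

/-- For an idempotent `e ∈ End(X)`, the set `J_e := { a ∈ e∘End(X)∘e : J(a) ≠ J(e) }`
(with `e∘a∘e` written `e ≫ a ≫ e` in Lean). -/
def Jlower {C : Type*} [Category C] {X : C} (e : X ⟶ X) : Set (X ⟶ X) :=
  { a | (∃ b : X ⟶ X, a = e ≫ b ≫ e) ∧ Jset a ≠ Jset e }

/-!
The inclusion `Mor(C)∘J_e ⊆ Mor(C)∘e` is clear, and `J(v∘a) ⊆ J(a) ⊆ J(e)` for `a ∈ e∘End(X)∘e`,
so `J(v∘a) = J(e)` would force `J(a) = J(e)`. Conversely, if `x = v∘e` and `x∘t∘x = x`, then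
`a := e∘(t∘v)∘e` lies in `e∘End(X)∘e`, satisfies `x = v∘a`, and `a` and `x` generate the same
two-sided ideal since each is a multiple of the other.
-/

section

variable {C : Type*} [Category C]

lemma Jset_comp_subset {W X Y Z : C} (u : W ⟶ X) (s : X ⟶ Y) (v : Y ⟶ Z) :
    Jset (u ≫ s ≫ v) ⊆ Jset s := by
  rintro m ⟨A, B, p, q, rfl⟩
  exact ⟨A, B, p ≫ u, v ≫ q, by simp only [Category.assoc]; rfl⟩

lemma Jset_comp_left_subset {W X Y : C} (u : W ⟶ X) (s : X ⟶ Y) : Jset (u ≫ s) ⊆ Jset s := by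
  simpa using Jset_comp_subset u s (𝟙 Y)

lemma Jset_comp_right_subset {X Y Z : C} (s : X ⟶ Y) (v : Y ⟶ Z) : Jset (s ≫ v) ⊆ Jset s := by
  simpa using Jset_comp_subset (𝟙 X) s v

lemma Jset_corner_eq_of_regular {X Z : C} {e : X ⟶ X} {v : X ⟶ Z} {t : Z ⟶ X}
    (ht : (e ≫ v) ≫ t ≫ (e ≫ v) = e ≫ v) : Jset (e ≫ (v ≫ t) ≫ e) = Jset (e ≫ v) := by
  refine Set.Subset.antisymm ?_ ?_
  · simpa using Jset_comp_right_subset (e ≫ v) (t ≫ e)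
  calc Jset (e ≫ v) = Jset ((e ≫ (v ≫ t) ≫ e) ≫ v) := by rw [← ht]; simp
    _ ⊆ Jset (e ≫ (v ≫ t) ≫ e) := Jset_comp_right_subset _ _

end

/-- In a finite split category, for an idempotent `e ∈ End(X)`,
`{ x ∈ Mor(C)∘e : J(x) ≠ J(e) } = Mor(C)∘J_e`. -/
theorem statement10 {C : Type*} [Category C] [Finite C]
    [∀ X Y : C, Finite (X ⟶ Y)]
    (hsplit : ∀ {X Y : C} (s : X ⟶ Y), ∃ t : Y ⟶ X, s ≫ t ≫ s = s)
    {X : C} (e : X ⟶ X) (he : e ≫ e = e) :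
    { m : Mor C | m ∈ Lset e ∧ JsetM m ≠ Jset e } =
      { m : Mor C | ∃ a ∈ Jlower e, ∃ (Z : C) (v : X ⟶ Z), m = ⟨X, Z, a ≫ v⟩ } := by
  ext m
  constructor
  · rintro ⟨⟨Z, v, rfl⟩, hne⟩
    obtain ⟨t, ht⟩ := hsplit (e ≫ v)
    have hfactor : e ≫ v = (e ≫ (v ≫ t) ≫ e) ≫ v := by simpa using ht.symm
    refine ⟨e ≫ (v ≫ t) ≫ e, ⟨⟨v ≫ t, rfl⟩, ?_⟩, Z, v, by rw [← hfactor]⟩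
    rwa [Jset_corner_eq_of_regular ht]
  · rintro ⟨a, ⟨⟨b, rfl⟩, hne⟩, Z, v, rfl⟩
    refine ⟨⟨Z, b ≫ e ≫ v, by simp only [Category.assoc]; rfl⟩, fun h => hne ?_⟩
    have hle : Jset (e ≫ b ≫ e) ⊆ Jset e := by simpa using Jset_comp_left_subset (e ≫ b) e
    exact hle.antisymm (h ▸ Jset_comp_right_subset _ v)
end

section
/- Let C be a finite split category, let e ∈ End_C(X) be an idempotent, and let a ∈ e∘End_C(X)∘e. Then a is invertible in the monoid e∘End_C(X)∘e (whose multiplication is composition and whose identity element is e), i.e., there exists b ∈ e∘End_C(X)∘e with a∘b = e = b∘a, if and only if J(a) = J(e). -/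
open CategoryTheory

/-! The corner `e ∘ End(X) ∘ e` is a finite monoid with identity `e`, and `J(a) = J(e)` says
exactly that `e = u ∘ a ∘ v` for some endomorphisms `u, v`. Compressing `u` and `v` into the corner
gives `u' a v' = e` there, so `a` has a left and a right inverse, because in a finite monoid
`x y = 1` forces `y x = 1`. -/

namespace IsIdempotentElem

variable {M : Type*} [Semigroup M] {e : M} (idem : IsIdempotentElem e)

instance : Monoid idem.Corner where
  __ : Semigroup idem.Corner := inferInstanceAs (Semigroup (Subsemigroup.corner e))
  one := ⟨e, e, by simp_rw [idem.eq]⟩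
  one_mul r := Subtype.ext ((Subsemigroup.mem_corner_iff idem).mp r.2).1
  mul_one r := Subtype.ext ((Subsemigroup.mem_corner_iff idem).mp r.2).2

instance [Finite M] : Finite idem.Corner := inferInstanceAs (Finite (Subsemigroup.corner e))

theorem isUnit_corner_iff_exists {a : idem.Corner} :
    IsUnit a ↔ ∃ b ∈ Subsemigroup.corner e, a.1 * b = e ∧ b * a.1 = e := by
  constructor
  · rintro ⟨⟨a, b, hab, hba⟩, rfl⟩
    exact ⟨b.1, b.2, congrArg Subtype.val hab, congrArg Subtype.val hba⟩
  · rintro ⟨b, hb, hab, hba⟩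
    exact ⟨⟨a, ⟨b, hb⟩, Subtype.ext hab, Subtype.ext hba⟩, rfl⟩

theorem isUnit_corner_iff_exists_eq_mul_mul [Finite M] {a : idem.Corner} :
    IsUnit a ↔ ∃ u v : M, e = u * a.1 * v := by
  obtain ⟨hea, hae⟩ := (Subsemigroup.mem_corner_iff idem).mp a.2
  constructor
  · rintro ⟨⟨a, b, -, hba⟩, rfl⟩
    refine ⟨b.1, e, ?_⟩
    rw [show b.1 * a.1 = e from congrArg Subtype.val hba, idem.eq]
  · rintro ⟨u, v, h⟩
    let u' : idem.Corner := ⟨e * u * e, u, rfl⟩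
    let v' : idem.Corner := ⟨e * v * e, v, rfl⟩
    have huav : u' * a * v' = 1 := Subtype.ext <| calc
      e * u * e * a.1 * (e * v * e) = e * (u * (e * a.1 * e) * v) * e := by simp only [mul_assoc]
      _ = e := by rw [hea, hae, ← h, idem.eq, idem.eq]
    have hleft : v' * u' * a = 1 := by
      rw [mul_assoc, mul_eq_one_symm huav]
    have hright : a * (v' * u') = 1 := by
      rw [← mul_assoc, mul_eq_one_symm (by rwa [mul_assoc] at huav)]
    exact ⟨⟨a, v' * u', hright, hleft⟩, rfl⟩

end IsIdempotentElem

namespace CategoryTheory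

variable {C : Type*} [Category C]

theorem Jset_subset_Jset_iff {X Y X' Y' : C} {s : X ⟶ Y} {t : X' ⟶ Y'} :
    Jset s ⊆ Jset t ↔ ∃ (u : X ⟶ X') (v : Y' ⟶ Y), s = u ≫ t ≫ v := by
  constructor
  · intro h
    have hs : (⟨X, Y, s⟩ : Mor C) ∈ Jset s :=
      ⟨X, Y, 𝟙 X, 𝟙 Y, by simp only [Category.id_comp, Category.comp_id]; rfl⟩
    obtain ⟨W, Z, u, v, hm⟩ := h hs
    obtain ⟨rfl, hm⟩ := Sigma.mk.inj_iff.mp hm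
    obtain ⟨rfl, hm⟩ := Sigma.mk.inj_iff.mp (eq_of_heq hm)
    exact ⟨u, v, eq_of_heq hm⟩
  · rintro ⟨u, v, rfl⟩ m ⟨W, Z, p, q, rfl⟩
    exact ⟨W, Z, p ≫ u, v ≫ q, by simp only [Category.assoc]; rfl⟩

theorem End.mem_corner_iff {X : C} {e b : End X} :
    b ∈ Subsemigroup.corner e ↔ ∃ c : X ⟶ X, b = e ≫ c ≫ e :=
  exists_congr fun _ => eq_comm

end CategoryTheory

/-- In a finite split category, let `e ∈ End(X)` be an idempotent and
let `a ∈ e∘End(X)∘e`.  Then `a` is invertible in the monoid `e∘End(X)∘e` (with identity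
element `e`), i.e. there exists `b ∈ e∘End(X)∘e` with `a∘b = e = b∘a`, if and only if
`J(a) = J(e)`. -/
theorem statement11 {C : Type*} [Category C] [Finite C]
    [∀ X Y : C, Finite (X ⟶ Y)]
    (hsplit : ∀ {X Y : C} (s : X ⟶ Y), ∃ t : Y ⟶ X, s ≫ t ≫ s = s)
    {X : C} (e : X ⟶ X) (he : e ≫ e = e)
    (a : X ⟶ X) (ha : ∃ c : X ⟶ X, a = e ≫ c ≫ e) :
    (∃ b : X ⟶ X, (∃ c : X ⟶ X, b = e ≫ c ≫ e) ∧ b ≫ a = e ∧ a ≫ b = e) ↔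
      Jset a = Jset e := by
  have : Finite (End X) := inferInstanceAs (Finite (X ⟶ X))
  have idem : IsIdempotentElem (M := End X) e := he
  have ha' : a ∈ Subsemigroup.corner (R := End X) e := End.mem_corner_iff.mpr ha
  obtain ⟨c, hc⟩ := ha
  have hJ : Jset a ⊆ Jset e := Jset_subset_Jset_iff.mpr ⟨𝟙 X, c ≫ e, by simpa using hc⟩
  let a' : idem.Corner := ⟨a, ha'⟩
  -- In `End X`, `f * g = g ≫ f`.
  calc (∃ b : X ⟶ X, (∃ c : X ⟶ X, b = e ≫ c ≫ e) ∧ b ≫ a = e ∧ a ≫ b = e)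
      ↔ ∃ b ∈ Subsemigroup.corner (R := End X) e, a'.1 * b = e ∧ b * a'.1 = e := by
        simp only [End.mem_corner_iff]; rfl
    _ ↔ IsUnit a' := idem.isUnit_corner_iff_exists.symm
    _ ↔ ∃ u v : End X, e = v ≫ a ≫ u := idem.isUnit_corner_iff_exists_eq_mul_mul
    _ ↔ Jset e ⊆ Jset a := exists_comm.trans Jset_subset_Jset_iff.symm
    _ ↔ Jset a = Jset e := ⟨hJ.antisymm, fun h => h ▸ subset_rfl⟩
end

section
/- Let M be a finite regular monoid and let k be a field such that the order of Γ_e is invertible in k for every idempotent e ∈ M. Let A := MonoidAlgebra k M. Then the Jacobson radical of A equals { u ∈ A : for every idempotent e ∈ M, e·A·u·A·e ⊆ kJ_e }, where kJ_e denotes the k-linear span in A of the set J_e := eMe ∖ Γ_e, and e·A·u·A·e := { e·a·u·b·e : a, b ∈ A }. -/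
/-!
If `u` is in the radical, so is `x = e a u b e`, and `x` lies in the corner `e k[M] e`, the
image of `k[eMe]`; a left quasi-inverse of an element of the corner can be cut down to the corner,
so `x` comes from the radical of `k[eMe]`. The monoid `eMe` is finite, hence Dedekind-finite, so
its non-units form an ideal and discarding them is an algebra map onto `k[Γ_e]`, which is
semisimple by Maschke's theorem. The image of `x` there is therefore zero: `x` is supported
on `J_e`.

Conversely, it suffices that `u` annihilates every simple module `V`. Otherwise choose an
idempotent `e` acting nontrivially on `V` with `MeM` minimal. If `s ∈ J_e` acted nontrivially on
`eV`, then so would the idempotent `ts`, where `sts = s`; minimality forces `MtsM = MeM`, so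
`e ∈ MsM`, which makes `s` a unit of `eMe`. Hence `kJ_e` kills `eV`. By simplicity
`ew = (e d u c e) ew` for some `c, d`, and `e d u c e ∈ kJ_e` by hypothesis, so `eV = 0`,
a contradiction.
-/

/-- The submonoid `eMe = { e·a·e : a ∈ M }` of a monoid `M`, for an idempotent `e`. -/
def eMe {M : Type*} [Monoid M] (e : M) : Set M := { a : M | ∃ c : M, a = e * c * e }

/-- The group `Γ_e` of invertible elements of the monoid `eMe` (identity element `e`). -/
def unitSet {M : Type*} [Monoid M] (e : M) : Set M :=
  { a : M | a ∈ eMe e ∧ ∃ b ∈ eMe e, a * b = e ∧ b * a = e }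

/-- The set `J_e := eMe ∖ Γ_e`. -/
def Je {M : Type*} [Monoid M] (e : M) : Set M := eMe e \ unitSet e

open MonoidAlgebra

section Corner

variable {M : Type*} [Monoid M] {e : M} (he : IsIdempotentElem e)

lemma mem_eMe_iff_mem_corner {a : M} : a ∈ eMe e ↔ a ∈ Subsemigroup.corner e :=
  exists_congr fun _ ↦ eq_comm

instance IsIdempotentElem.Corner.instMonoid : Monoid he.Corner where
  __ : Semigroup he.Corner := inferInstanceAs (Semigroup (Subsemigroup.corner e))
  one := ⟨e, e, by simp_rw [he.eq]⟩
  one_mul r := Subtype.ext ((Subsemigroup.mem_corner_iff he).mp r.2).1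
  mul_one r := Subtype.ext ((Subsemigroup.mem_corner_iff he).mp r.2).2

instance [Finite M] : Finite he.Corner := Subtype.finite

def IsIdempotentElem.toCorner (a : M) : he.Corner := ⟨e * a * e, a, rfl⟩

namespace IsIdempotentElem.Corner

@[simp] lemma val_toCorner (a : M) : (he.toCorner a).1 = e * a * e := rfl

lemma isUnit_iff_mem_unitSet (a : he.Corner) : IsUnit a ↔ a.1 ∈ unitSet e := by
  constructor
  · rintro ⟨u, rfl⟩
    exact ⟨mem_eMe_iff_mem_corner.2 u.1.2, u⁻¹.1.1, mem_eMe_iff_mem_corner.2 u⁻¹.1.2,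
      congrArg Subtype.val u.mul_inv, congrArg Subtype.val u.inv_mul⟩
  · rintro ⟨-, b, hb, hab, hba⟩
    exact ⟨⟨a, ⟨b, mem_eMe_iff_mem_corner.1 hb⟩, Subtype.ext hab, Subtype.ext hba⟩, rfl⟩

lemma card_units : Nat.card he.Cornerˣ = Nat.card (unitSet e) := by
  refine Nat.card_congr (Equiv.ofBijective
    (fun u ↦ ⟨u.1.1, (isUnit_iff_mem_unitSet he _).1 u.isUnit⟩) ⟨?_, ?_⟩)
  · intro u v huv
    exact Units.ext (Subtype.ext (congrArg Subtype.val huv :))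
  · rintro ⟨a, ha⟩
    obtain ⟨u, hu⟩ := (isUnit_iff_mem_unitSet he ⟨a, mem_eMe_iff_mem_corner.1 ha.1⟩).2 ha
    exact ⟨u, Subtype.ext (congrArg Subtype.val hu :)⟩

end IsIdempotentElem.Corner

end Corner

section PrincipalIdeal

variable {M : Type*} [Monoid M]

def principalIdeal (a : M) : Set M := {x | ∃ p q : M, x = p * a * q}

lemma mem_principalIdeal_self (a : M) : a ∈ principalIdeal a := ⟨1, 1, by simp⟩

lemma principalIdeal_subset {a b : M} (h : a ∈ principalIdeal b) :
    principalIdeal a ⊆ principalIdeal b := by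
  obtain ⟨p, q, rfl⟩ := h
  rintro _ ⟨p', q', rfl⟩
  exact ⟨p' * p, q * q', by simp only [mul_assoc]⟩

lemma mem_unitSet_of_eq_mul_mul [Finite M] {e s : M} (he : IsIdempotentElem e) (hs : s ∈ eMe e)
    {p q : M} (h : e = p * s * q) : s ∈ unitSet e := by
  have hs' := mem_eMe_iff_mem_corner.1 hs
  obtain ⟨hes, hse⟩ := (Subsemigroup.mem_corner_iff he).1 hs'
  let s' : he.Corner := ⟨s, hs'⟩
  have hpsq : he.toCorner p * s' * he.toCorner q = 1 := Subtype.ext <|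
    calc e * p * e * s * (e * q * e) = e * (p * (e * s * e) * q) * e := by simp only [mul_assoc]
      _ = e := by rw [hes, hse, ← h, he.eq, he.eq]
  exact (IsIdempotentElem.Corner.isUnit_iff_mem_unitSet he s').1 <|
    isUnit_of_mul_isUnit_right (isUnit_of_mul_isUnit_left (hpsq ▸ isUnit_one))

end PrincipalIdeal

namespace MonoidAlgebra

variable (k : Type*) [CommSemiring k] (N : Type*) [Monoid N] [IsDedekindFiniteMonoid N]

open Classical in
noncomputable def unitsProj : k[N] →ₐ[k] k[Nˣ] :=
  lift k k[Nˣ] N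
    { toFun n := if h : IsUnit n then of k Nˣ h.unit else 0
      map_one' := by simp [one_def]
      map_mul' m n := by
        by_cases hm : IsUnit m <;> by_cases hn : IsUnit n <;> simp [hm, hn, ← IsUnit.unit_mul] }

variable {k N}

open Classical in
lemma unitsProj_single (n : N) (c : k) :
    unitsProj k N (single n c) = if h : IsUnit n then single h.unit c else 0 := by
  by_cases hn : IsUnit n <;> simp [unitsProj, hn]

lemma coeff_unitsProj (x : k[N]) (u : Nˣ) : (unitsProj k N x).coeff u = x.coeff u := by
  classical
  induction x using MonoidAlgebra.induction_linear with
  | zero => simp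
  | add f g hf hg => simp [hf, hg]
  | single n c =>
    rw [unitsProj_single]
    split_ifs with hn
    · simp only [coeff_single, Finsupp.single_apply, Units.ext_iff, IsUnit.unit_spec]
    · have hnu : n ≠ u := fun h ↦ hn (h ▸ u.isUnit)
      simp [hnu]

lemma unitsProj_surjective : Function.Surjective (unitsProj k N) := by
  intro y
  induction y using MonoidAlgebra.induction_linear with
  | zero => exact ⟨0, map_zero _⟩
  | add f g hf hg =>
    obtain ⟨x, rfl⟩ := hf
    obtain ⟨x', rfl⟩ := hg
    exact ⟨x + x', map_add _ x x'⟩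
  | single u c => exact ⟨single u c, by simp [unitsProj_single]⟩

end MonoidAlgebra

section Jacobson

universe u

variable {R : Type u} [Ring R]

lemma mem_jacobson_iff_exists_mul_eq_one {x : R} :
    x ∈ Ring.jacobson R ↔ ∀ y, ∃ z, z * (y * x + 1) = 1 := by
  simp only [← Ideal.jacobson_bot, Ideal.mem_jacobson_iff, Ideal.mem_bot, sub_eq_zero, mul_add,
    mul_one, mul_assoc]

lemma NonUnitalRingHom.mem_jacobson_of_map_mem {S : Type*} [Ring S] (f : S →ₙ+* R)
    (hf : Function.Injective f) (hcorner : ∀ r, f 1 * r * f 1 ∈ Set.range f) {x : S}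
    (hx : f x ∈ Ring.jacobson R) : x ∈ Ring.jacobson S := by
  rw [mem_jacobson_iff_exists_mul_eq_one] at hx ⊢
  intro y
  obtain ⟨w, hw⟩ := hx (f y)
  obtain ⟨z, hz⟩ := hcorner w
  refine ⟨z, hf ?_⟩
  have hidem : f 1 * f 1 = f 1 := by rw [← map_mul, mul_one]
  have hleft : f 1 * f (y * x) = f (y * x) := by rw [← map_mul, one_mul]
  have hright : f (y * x) * f 1 = f (y * x) := by rw [← map_mul, mul_one]
  calc f (z * (y * x + 1)) = f 1 * w * f 1 * (f (y * x) + f 1) := by rw [map_mul, hz, map_add]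
    _ = f 1 * w * (f (y * x) + f 1) := by rw [mul_assoc (f 1 * w), mul_add, hleft, hidem]
    _ = f 1 * (w * (f (y * x) + 1)) * f 1 := by
        rw [mul_assoc, mul_assoc, mul_assoc, add_mul, hright, one_mul]
    _ = f 1 := by rw [map_mul, hw, mul_one, hidem]

lemma mem_jacobson_of_forall_smul_eq_zero {x : R}
    (hx : ∀ (V : Type u) [AddCommGroup V] [Module R V], IsSimpleModule R V → ∀ v : V, x • v = 0) :
    x ∈ Ring.jacobson R := by
  rw [Ring.jacobson_eq_sInf_isMaximal]
  refine Submodule.mem_sInf.2 fun m hm ↦ ?_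
  have hsimple : IsSimpleModule R (R ⧸ m) :=
    isSimpleModule_iff_isCoatom.2 (Ideal.isMaximal_def.1 hm)
  have h := hx (R ⧸ m) hsimple (Submodule.Quotient.mk 1)
  rwa [← Submodule.Quotient.mk_smul, smul_eq_mul, mul_one, Submodule.Quotient.mk_eq_zero] at h

end Jacobson

section CornerAlgebra

variable {M : Type*} [Monoid M] {e : M} (he : IsIdempotentElem e) (k : Type*) [Semiring k]

noncomputable def IsIdempotentElem.cornerEmbedding : k[he.Corner] →ₙ+* k[M] :=
  mapDomainNonUnitalRingHom k
    ({ toFun := Subtype.val, map_mul' := fun _ _ ↦ rfl } : he.Corner →ₙ* M)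

namespace IsIdempotentElem

lemma cornerEmbedding_single (a : he.Corner) (c : k) :
    he.cornerEmbedding k (single a c) = single a.1 c :=
  mapDomain_single

lemma cornerEmbedding_injective : Function.Injective (he.cornerEmbedding k) :=
  mapDomain_injective fun _ _ h ↦ Subtype.ext h

lemma cornerEmbedding_one : he.cornerEmbedding k 1 = of k M e := by
  rw [one_def, cornerEmbedding_single]
  rfl

lemma of_mul_mul_of_mem_range_cornerEmbedding (y : k[M]) :
    of k M e * y * of k M e ∈ Set.range (he.cornerEmbedding k) := by
  induction y using MonoidAlgebra.induction_linear with
  | zero => exact ⟨0, by simp⟩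
  | add f g hf hg =>
    obtain ⟨x, hx⟩ := hf
    obtain ⟨x', hx'⟩ := hg
    exact ⟨x + x', by rw [map_add, hx, hx', mul_add, add_mul]⟩
  | single m c =>
    refine ⟨single (he.toCorner m) c, ?_⟩
    rw [cornerEmbedding_single, Corner.val_toCorner, of_apply, single_mul_single,
      single_mul_single, one_mul, mul_one]

lemma cornerEmbedding_mem_span_Je {x : k[he.Corner]} (hx : ∀ u : he.Cornerˣ, x.coeff u = 0) :
    he.cornerEmbedding k x ∈ Submodule.span k (of k M '' Je e) := by
  classical
  refine Submodule.span_mono (Set.image_mono ?_) (mem_span_support_coeff _)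
  intro m hm
  obtain ⟨a, ha, rfl⟩ := Finset.mem_image.1 (Finsupp.mapDomain_support hm)
  refine ⟨mem_eMe_iff_mem_corner.2 a.2, fun hunit ↦ Finsupp.mem_support_iff.1 ha ?_⟩
  obtain ⟨u, rfl⟩ := (Corner.isUnit_iff_mem_unitSet he a).2 hunit
  exact hx u

end IsIdempotentElem

end CornerAlgebra

theorem of_mul_mul_of_mem_span_Je_of_mem_jacobson {M : Type*} [Monoid M] [Finite M]
    {k : Type*} [Field k] {e : M} (he : IsIdempotentElem e)
    (hk : IsUnit (Nat.card (unitSet e) : k)) {x : k[M]} (hx : x ∈ Ring.jacobson k[M]) :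
    of k M e * x * of k M e ∈ Submodule.span k (of k M '' Je e) := by
  obtain ⟨y, hy⟩ := he.of_mul_mul_of_mem_range_cornerEmbedding k x
  have hyJ : y ∈ Ring.jacobson k[he.Corner] :=
    (he.cornerEmbedding k).mem_jacobson_of_map_mem (he.cornerEmbedding_injective k)
      (fun r ↦ he.cornerEmbedding_one k ▸ he.of_mul_mul_of_mem_range_cornerEmbedding k r)
      (hy ▸ Ideal.mul_mem_right _ _ (Ideal.mul_mem_left _ _ hx))
  have : NeZero (Nat.card he.Cornerˣ : k) := ⟨IsIdempotentElem.Corner.card_units he ▸ hk.ne_zero⟩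
  let π : k[he.Corner] →+* k[he.Cornerˣ] := unitsProj k he.Corner
  have : RingHomSurjective π := ⟨unitsProj_surjective⟩
  have hproj : π y = 0 := by
    have := Ring.map_jacobson_le π ⟨y, hyJ, rfl⟩
    rwa [IsSemisimpleRing.jacobson_eq_bot] at this
  rw [← hy]
  exact he.cornerEmbedding_mem_span_Je k fun u ↦ by
    rw [← coeff_unitsProj]
    exact congr_arg (·.coeff u) hproj

section Annihilation

variable {M : Type*} [Monoid M] {V : Type*}

lemma exists_isIdempotentElem_smul_ne_zero_and_Je_smul_eq_zero [Finite M] {k : Type*} [Semiring k]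
    [AddCommMonoid V] [Module k[M] V] [Nontrivial V] (hreg : ∀ s : M, ∃ t : M, s * t * s = s) :
    ∃ e : M, IsIdempotentElem e ∧ (∃ v : V, of k M e • v ≠ 0) ∧
      ∀ s ∈ Je e, ∀ v : V, of k M s • of k M e • v = 0 := by
  let P : M → Prop := fun f ↦ IsIdempotentElem f ∧ ∃ v : V, of k M f • v ≠ 0
  have hP1 : P 1 := ⟨IsIdempotentElem.one, by simpa [← one_def] using exists_ne (0 : V)⟩
  obtain ⟨e, ⟨he, hv⟩, hmin⟩ := exists_minimalFor_of_wellFoundedLT P principalIdeal ⟨1, hP1⟩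
  refine ⟨e, he, hv, fun s hs w ↦ ?_⟩
  by_contra hsw
  obtain ⟨t, ht⟩ := hreg s
  have hPts : P (t * s) := by
    refine ⟨by rw [IsIdempotentElem, mul_assoc, ← mul_assoc s, ht], of k M e • w, fun h ↦ hsw ?_⟩
    rw [← ht, mul_assoc, map_mul, mul_smul, h, smul_zero]
  have hle : principalIdeal (t * s) ⊆ principalIdeal e := by
    obtain ⟨c, hc⟩ := hs.1
    exact principalIdeal_subset ⟨t * e * c, 1, by rw [hc]; simp only [mul_assoc, mul_one]⟩
  obtain ⟨p, q, hpq⟩ := hmin hPts hle (mem_principalIdeal_self e)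
  exact hs.2 (mem_unitSet_of_eq_mul_mul he hs.1 (p := p * t) (q := q) (by rw [hpq, ← mul_assoc p]))

lemma smul_eq_zero_of_mem_span_Je {k : Type*} [CommSemiring k] [AddCommMonoid V] [Module k[M] V]
    {e : M} (hJe : ∀ s ∈ Je e, ∀ v : V, of k M s • of k M e • v = 0)
    {X : k[M]} (hX : X ∈ Submodule.span k (of k M '' Je e)) (v : V) : X • of k M e • v = 0 := by
  induction hX using Submodule.span_induction with
  | mem _ h => obtain ⟨s, hs, rfl⟩ := h; exact hJe s hs v
  | zero => exact zero_smul _ _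
  | add _ _ _ _ hX hY => rw [add_smul, hX, hY, add_zero]
  | smul c _ _ hX => rw [Algebra.smul_def, mul_smul, hX, smul_zero]

lemma smul_eq_zero_of_forall_corner_mem_span [Finite M] {k : Type*} [CommRing k]
    [AddCommGroup V] [Module k[M] V] [IsSimpleModule k[M] V]
    (hreg : ∀ s : M, ∃ t : M, s * t * s = s) {u : k[M]}
    (hu : ∀ e : M, e * e = e → ∀ a b : k[M],
      of k M e * a * u * b * of k M e ∈ Submodule.span k (of k M '' Je e))
    (v : V) : u • v = 0 := by
  by_contra huv
  have : Nontrivial V := IsSimpleModule.nontrivial k[M] V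
  obtain ⟨e, he, ⟨w, hw⟩, hJe⟩ :=
    exists_isIdempotentElem_smul_ne_zero_and_Je_smul_eq_zero (k := k) (V := V) hreg
  obtain ⟨c, hc⟩ := Submodule.mem_span_singleton.1
    ((IsSimpleModule.span_singleton_eq_top k[M] hw).symm ▸ Submodule.mem_top : v ∈ _)
  obtain ⟨d, hd⟩ := Submodule.mem_span_singleton.1
    ((IsSimpleModule.span_singleton_eq_top k[M] huv).symm ▸ Submodule.mem_top : w ∈ _)
  have hee : of k M e • of k M e • w = of k M e • w := by rw [← mul_smul, ← map_mul, he.eq]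
  apply hw
  calc of k M e • w = (of k M e * d * u * c * of k M e) • of k M e • w := by
        simp only [mul_smul, hee, hc, hd]
    _ = 0 := smul_eq_zero_of_mem_span_Je hJe (hu e he d c) w

end Annihilation

/-- Let `M` be a finite regular monoid and `k` a field such that
`|Γ_e|` is invertible in `k` for every idempotent `e ∈ M`.  Then the Jacobson radical of
`A := MonoidAlgebra k M` equals
`{ u ∈ A : ∀ idempotent e ∈ M, e·A·u·A·e ⊆ kJ_e }`,
where `kJ_e` is the `k`-linear span of `J_e = eMe ∖ Γ_e` in `A`. -/
theorem statement13 {M : Type*} [Monoid M] [Finite M]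
    (hreg : ∀ s : M, ∃ t : M, s * t * s = s)
    {k : Type*} [Field k]
    (hk : ∀ e : M, e * e = e → IsUnit ((Nat.card ↥(unitSet e) : k))) :
    ((⊥ : Ideal (MonoidAlgebra k M)).jacobson : Set (MonoidAlgebra k M)) =
      { u : MonoidAlgebra k M | ∀ e : M, e * e = e →
        ∀ a b : MonoidAlgebra k M,
          MonoidAlgebra.of k M e * a * u * b * MonoidAlgebra.of k M e ∈
            Submodule.span k (⇑(MonoidAlgebra.of k M) '' Je e) } := by
  ext u
  rw [Ideal.jacobson_bot, SetLike.mem_coe, Set.mem_ofPred_eq]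
  refine ⟨fun hu e he a b ↦ ?_, fun hu ↦ ?_⟩
  · simpa only [mul_assoc] using of_mul_mul_of_mem_span_Je_of_mem_jacobson he (hk e he)
      (Ideal.mul_mem_right b _ (Ideal.mul_mem_left _ a hu))
  · exact mem_jacobson_of_forall_smul_eq_zero fun V _ _ _ v ↦
      smul_eq_zero_of_forall_corner_mem_span hreg hu v
end

section
/- Let M be a finite regular monoid and let k be a field such that the order of Γ_e is invertible in k for every idempotent e ∈ M. Let A := MonoidAlgebra k M, let u be an element of the Jacobson radical of A, and let s, t ∈ M with MsM = MtM. Then s·u·t lies in the k-linear span of the set { x ∈ MsM : MxM ≠ MsM }. -/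
/-- The set `MsM = { a·s·b : a, b ∈ M }` for an element `s` of a monoid `M`. -/
def MsM {M : Type*} [Monoid M] (s : M) : Set M := { x : M | ∃ a b : M, x = a * s * b }

/-!
Write `e = s t₀`, `f = t₁ t` for idempotents obtained from regularity, so that `s u t ∈ e A f`
and `e = p f q`. Left multiplication by `y = f q e` is injective on `e M` (`p y = e`), maps
`s u t` into `J ∩ k[fMf]`, and maps every `x` in its support with `MxM = MsM` to a unit of
`fMf`. So it suffices to show that `w ∈ J ∩ k[fMf]` has zero coefficient at each `g ∈ Γ_f`;
multiplying by `g⁻¹` reduces this to the coefficient at `f` itself. Since the non-units of the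
finite monoid `fMf` form an ideal, the `Γ_f × Γ_f` block of right multiplication is
multiplicative on `k[fMf]`; for nilpotent `w` this block is nilpotent, so its trace
`|Γ_f| · w_f` vanishes.
-/

open MonoidAlgebra
open scoped Pointwise

section Monoid

variable {M : Type*} [Monoid M]

lemma mem_MsM_self (s : M) : s ∈ MsM s := ⟨1, 1, by simp⟩

lemma MsM_subset_of_mem {s x : M} (h : x ∈ MsM s) : MsM x ⊆ MsM s := by
  obtain ⟨c, d, rfl⟩ := h
  rintro _ ⟨a, b, rfl⟩
  exact ⟨a * c, d * b, by simp only [mul_assoc]⟩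

lemma MsM_eq_of_mem_of_mem {s x : M} (hx : x ∈ MsM s) (hs : s ∈ MsM x) : MsM x = MsM s :=
  (MsM_subset_of_mem hx).antisymm (MsM_subset_of_mem hs)

lemma idem_mul_of_mem_eMe {e x : M} (he : e * e = e) (hx : x ∈ eMe e) : e * x = x := by
  obtain ⟨c, rfl⟩ := hx
  simp only [← mul_assoc, he]

lemma mul_idem_of_mem_eMe {e x : M} (he : e * e = e) (hx : x ∈ eMe e) : x * e = x := by
  obtain ⟨c, rfl⟩ := hx
  simp only [mul_assoc, he]

lemma mul_mem_eMe {e x y : M} (hx : x ∈ eMe e) (hy : y ∈ eMe e) : x * y ∈ eMe e := by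
  obtain ⟨c, rfl⟩ := hx
  obtain ⟨d, rfl⟩ := hy
  exact ⟨c * e * e * d, by simp only [mul_assoc]⟩

lemma exists_mul_eq_idem_of_mem_MsM {e f : M} (he : e * e = e) (hf : f * f = f)
    (h : e ∈ MsM f) : ∃ p y : M, p * y = e ∧ f * y = y := by
  obtain ⟨p, q, hpq⟩ := h
  exact ⟨p, f * q * e, by simp only [← mul_assoc, ← hpq, he],
    by simp only [← mul_assoc, hf]⟩

variable [Finite M]

/-- Left multiplication by `p` on `{m | e * m = m}` is surjective, hence injective. -/
lemma mul_eq_idem_symm {e p b : M} (he : e * e = e) (hp : p ∈ eMe e) (hb : b ∈ eMe e)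
    (h : p * b = e) : b * p = e := by
  let φ : {m : M // e * m = m} → {m : M // e * m = m} :=
    fun m => ⟨p * m, by rw [← mul_assoc, idem_mul_of_mem_eMe he hp]⟩
  have hφ : φ.Surjective := fun m =>
    ⟨⟨b * m, by rw [← mul_assoc, idem_mul_of_mem_eMe he hb]⟩,
      Subtype.ext (by simp only [φ, ← mul_assoc, h, m.2])⟩
  have hbp : φ ⟨b * p, by rw [← mul_assoc, idem_mul_of_mem_eMe he hb]⟩ = φ ⟨e, he⟩ :=
    Subtype.ext (by simp only [φ, ← mul_assoc, h, idem_mul_of_mem_eMe he hp,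
      mul_idem_of_mem_eMe he hp])
  exact congrArg Subtype.val (Finite.injective_iff_surjective.2 hφ hbp)

lemma mul_notMem_unitSet {e x y : M} (he : e * e = e) (hx : x ∈ eMe e) (hy : y ∈ eMe e)
    (hxu : x ∉ unitSet e) : x * y ∉ unitSet e := by
  rintro ⟨-, b, hb, hxyb, -⟩
  rw [mul_assoc] at hxyb
  have hyb := mul_mem_eMe hy hb
  exact hxu ⟨hx, y * b, hyb, hxyb, mul_eq_idem_symm he hx hyb hxyb⟩

lemma mem_unitSet_of_mem_MsM {e x : M} (he : e * e = e) (hx : x ∈ eMe e) (h : e ∈ MsM x) :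
    x ∈ unitSet e := by
  obtain ⟨a, b, hab⟩ := h
  have hα : e * a * e ∈ eMe e := ⟨a, rfl⟩
  have hβ : e * b * e ∈ eMe e := ⟨b, rfl⟩
  have hαxβ : e * a * e * x * (e * b * e) = e := by
    calc e * a * e * x * (e * b * e) = e * (a * (e * x * e) * b) * e := by
          simp only [mul_assoc]
      _ = e := by rw [idem_mul_of_mem_eMe he hx, mul_idem_of_mem_eMe he hx, ← hab, he, he]
  have hβαx : e * b * e * (e * a * e) * x = e := by
    rw [mul_assoc]
    exact mul_eq_idem_symm he (mul_mem_eMe hα hx) hβ hαxβ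
  have hβα := mul_mem_eMe hβ hα
  exact ⟨hx, _, hβα, mul_eq_idem_symm he hβα hx hβαx, hβαx⟩

end Monoid

section Support

variable {M : Type*} [Monoid M] {k : Type*} [Semiring k]

lemma span_of_image_eq_supported (S : Set M) :
    Submodule.span k (of k M '' S) = supported k k S := by
  rw [supported_eq_span_single]
  rfl

lemma mul_mem_supported_mul {S T : Set M} {x y : MonoidAlgebra k M} (hx : x ∈ supported k k S)
    (hy : y ∈ supported k k T) : x * y ∈ supported k k (S * T) := by
  classical
  rw [mem_supported] at hx hy ⊢
  grw [support_coeff_mul_subset, Finset.coe_mul, hx, hy]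

lemma of_mem_supported (a : M) : of k M a ∈ supported k k {a} := by
  rw [mem_supported, of_apply, coeff_single]
  simpa using Finset.coe_subset.2 (Finsupp.support_single_subset (a := a) (b := (1 : k)))

lemma of_mul_mul_of_mem_supported (a b : M) (w : MonoidAlgebra k M) :
    of k M a * w * of k M b ∈ supported k k (Set.range fun m => a * m * b) := by
  have h := mul_mem_supported_mul (mul_mem_supported_mul (of_mem_supported (k := k) a)
    (show w ∈ supported k k Set.univ from fun _ _ => trivial)) (of_mem_supported b)
  refine supported_mono ?_ h
  rintro _ ⟨_, ⟨_, rfl, m, -, rfl⟩, _, rfl, rfl⟩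
  exact ⟨m, rfl⟩

lemma mul_mem_supported_eMe {e : M} {x y : MonoidAlgebra k M} (hx : x ∈ supported k k (eMe e))
    (hy : y ∈ supported k k (eMe e)) : x * y ∈ supported k k (eMe e) :=
  supported_mono (Set.mul_subset_iff.2 fun _ ha _ hb => mul_mem_eMe ha hb)
    (mul_mem_supported_mul hx hy)

lemma of_mem_supported_eMe {e a : M} (ha : a ∈ eMe e) : of k M a ∈ supported k k (eMe e) :=
  supported_mono (Set.singleton_subset_iff.2 ha) (of_mem_supported a)

lemma coeff_of_mul_mul_of_leftInverse {a b x : M} {w : MonoidAlgebra k M}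
    (hw : ∀ m ∈ w.coeff.support, b * (a * m) = m) (hx : b * (a * x) = x) :
    (of k M a * w).coeff (a * x) = w.coeff x := by
  rw [of_apply, coeff_single_mul_eq_mul_coeff x, one_mul]
  intro m hm
  refine ⟨fun h => ?_, fun h => h ▸ rfl⟩
  rw [← hw m hm, h, hx]

lemma coeff_mul_eq_sum_coeff_of_mul [Fintype M] (w c : MonoidAlgebra k M) (h : M) :
    (w * c).coeff h = ∑ m, w.coeff m * (of k M m * c).coeff h := by
  classical
  simp only [coeff_mul, of_apply, coeff_single]
  rw [Finsupp.sum_fintype _ _ (by simp)]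
  simp [Finsupp.mul_sum, mul_ite]

lemma coeff_of_mul_eq_zero_of_notMem_unitSet [Finite M] {e m h : M} {c : MonoidAlgebra k M}
    (he : e * e = e) (hm : m ∈ eMe e) (hmu : m ∉ unitSet e) (hc : c ∈ supported k k (eMe e))
    (hh : h ∈ unitSet e) : (of k M m * c).coeff h = 0 := by
  refine mem_supported'.1 (mul_mem_supported_mul (of_mem_supported m) hc) h ?_
  rintro ⟨_, rfl, d, hd, rfl⟩
  exact mul_notMem_unitSet he hm hd hmu hh

end Support

lemma isNilpotent_of_mem_jacobson_bot {R : Type*} [Ring R] [IsArtinianRing R] {x : R}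
    (hx : x ∈ (⊥ : Ideal R).jacobson) : IsNilpotent x := by
  obtain ⟨n, hn⟩ := IsArtinianRing.isNilpotent_jacobson_bot (R := R)
  exact ⟨n, by simpa [hn] using Ideal.pow_mem_pow hx n⟩

section UnitBlock

variable {M : Type*} [Monoid M] {k : Type*}

noncomputable def unitBlock [Semiring k] (e : M) (c : MonoidAlgebra k M) :
    Matrix (unitSet e) (unitSet e) k :=
  Matrix.of fun g h => (of k M g * c).coeff h

variable {e : M} (he : e * e = e)
include he

lemma trace_unitBlock [CommSemiring k] [Fintype (unitSet e)] {c : MonoidAlgebra k M}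
    (hc : c ∈ supported k k (eMe e)) :
    (unitBlock e c).trace = Fintype.card (unitSet e) * c.coeff e := by
  have hdiag : ∀ g : unitSet e, (of k M g * c).coeff g = c.coeff e := by
    intro g
    obtain ⟨hg, b, -, -, hbg⟩ := g.2
    have := coeff_of_mul_mul_of_leftInverse (a := (g : M)) (b := b) (x := e) (w := c)
      (fun m hm => by rw [← mul_assoc, hbg, idem_mul_of_mem_eMe he (hc hm)])
      (by rw [← mul_assoc, hbg, he])
    rwa [mul_idem_of_mem_eMe he hg] at this
  simp only [Matrix.trace, Matrix.diag, unitBlock, Matrix.of_apply, hdiag, Finset.sum_const,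
    Finset.card_univ, nsmul_eq_mul]

variable [Fintype M]

lemma unitBlock_mul [Semiring k] [Fintype (unitSet e)] {c c' : MonoidAlgebra k M}
    (hc : c ∈ supported k k (eMe e)) (hc' : c' ∈ supported k k (eMe e)) :
    unitBlock e (c * c') = unitBlock e c * unitBlock e c' := by
  classical
  ext g h
  have hgc : of k M g * c ∈ supported k k (eMe e) :=
    mul_mem_supported_eMe (of_mem_supported_eMe g.2.1) hc
  rw [unitBlock, Matrix.of_apply, ← mul_assoc, coeff_mul_eq_sum_coeff_of_mul, Matrix.mul_apply,
    ← Finset.sum_subset (Finset.subset_univ (Finset.univ.filter (· ∈ unitSet e)))]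
  · exact Finset.sum_subtype _ (by simp)
      fun m => (of k M g * c).coeff m * (of k M m * c').coeff h
  · intro m _ hm
    simp only [Finset.mem_filter, Finset.mem_univ, true_and] at hm
    by_cases hme : m ∈ eMe e
    · rw [coeff_of_mul_eq_zero_of_notMem_unitSet he hme hm hc' h.2, mul_zero]
    · rw [mem_supported'.1 hgc m hme, zero_mul]

lemma isNilpotent_unitBlock [Semiring k] [DecidableEq M] [Fintype (unitSet e)]
    {c : MonoidAlgebra k M} (hc : c ∈ supported k k (eMe e)) (hnil : IsNilpotent c) :
    IsNilpotent (unitBlock e c) := by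
  have hpow : ∀ n : ℕ, c ^ (n + 1) ∈ supported k k (eMe e) ∧
      unitBlock e (c ^ (n + 1)) = unitBlock e c ^ (n + 1) := by
    intro n
    induction n with
    | zero => simpa using hc
    | succ n ih =>
      rw [pow_succ c, pow_succ (unitBlock e c), unitBlock_mul he ih.1 hc, ih.2]
      exact ⟨mul_mem_supported_eMe ih.1 hc, rfl⟩
  obtain ⟨N, hN⟩ := hnil
  refine ⟨N + 1, ?_⟩
  rw [← (hpow N).2, pow_succ, hN, zero_mul]
  ext
  simp [unitBlock]

end UnitBlock

section Jacobson

variable {M : Type*} [Monoid M] [Finite M]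

lemma coeff_idem_eq_zero_of_isNilpotent {k : Type*} [CommRing k] [IsReduced k] {e : M}
    (he : e * e = e) (hk : IsUnit (Nat.card (unitSet e) : k)) {c : MonoidAlgebra k M}
    (hc : c ∈ supported k k (eMe e)) (hnil : IsNilpotent c) : c.coeff e = 0 := by
  classical
  have := Fintype.ofFinite M
  have htrace := (Matrix.isNilpotent_trace_of_isNilpotent
    (isNilpotent_unitBlock (e := e) he hc hnil)).eq_zero
  rwa [trace_unitBlock he hc, ← Nat.card_eq_fintype_card, hk.mul_right_eq_zero] at htrace

variable {k : Type*} [Field k]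

lemma coeff_eq_zero_of_mem_unitSet {e x : M} (he : e * e = e)
    (hk : IsUnit (Nat.card (unitSet e) : k)) {w : MonoidAlgebra k M}
    (hw : w ∈ supported k k (eMe e)) (hJ : w ∈ (⊥ : Ideal (MonoidAlgebra k M)).jacobson)
    (hx : x ∈ unitSet e) : w.coeff x = 0 := by
  have : IsArtinianRing (MonoidAlgebra k M) := IsArtinianRing.of_finite k _
  obtain ⟨hxe, γ, hγ, hxγ, hγx⟩ := hx
  have hγw := coeff_idem_eq_zero_of_isNilpotent he hk
    (mul_mem_supported_eMe (of_mem_supported_eMe hγ) hw)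
    (isNilpotent_of_mem_jacobson_bot (Ideal.mul_mem_left _ (of k M γ) hJ))
  rwa [← hγx, coeff_of_mul_mul_of_leftInverse (b := x)
    (fun m hm => by rw [← mul_assoc, hxγ, idem_mul_of_mem_eMe he (hw hm)])
    (by rw [hγx, mul_idem_of_mem_eMe he hxe])] at hγw

lemma coeff_eq_zero_of_mem_jacobson {e f x : M} (he : e * e = e) (hf : f * f = f)
    (hef : e ∈ MsM f) (hk : IsUnit (Nat.card (unitSet f) : k)) {v : MonoidAlgebra k M}
    (hJ : v ∈ (⊥ : Ideal (MonoidAlgebra k M)).jacobson)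
    (hv : v ∈ supported k k {m | e * m = m ∧ m * f = m}) (hx : MsM x = MsM f) :
    v.coeff x = 0 := by
  by_contra hvx
  obtain ⟨hex, hxf⟩ := hv (Finsupp.mem_support_iff.2 hvx)
  obtain ⟨p, y, hpy, hfy⟩ := exists_mul_eq_idem_of_mem_MsM he hf hef
  have hcorner : ∀ m, m * f = m → y * m ∈ eMe f := fun m hmf =>
    ⟨y * m, by rw [mul_assoc f, mul_assoc y, hmf, ← mul_assoc, hfy]⟩
  have hyx : y * x ∈ unitSet f := by
    refine mem_unitSet_of_mem_MsM hf (hcorner x hxf) ?_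
    rw [MsM_eq_of_mem_of_mem (s := x) ⟨y, 1, (mul_one _).symm⟩
      ⟨p, 1, by rw [mul_one, ← mul_assoc, hpy, hex]⟩, hx]
    exact mem_MsM_self f
  have hyv : of k M y * v ∈ supported k k (eMe f) := by
    refine supported_mono ?_ (mul_mem_supported_mul (of_mem_supported y) hv)
    rintro _ ⟨_, rfl, m, ⟨-, hmf⟩, rfl⟩
    exact hcorner m hmf
  refine hvx ?_
  rw [← coeff_of_mul_mul_of_leftInverse (fun m hm => by rw [← mul_assoc, hpy, (hv hm).1])
    (by rw [← mul_assoc, hpy, hex])]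
  exact coeff_eq_zero_of_mem_unitSet hf hk hyv (Ideal.mul_mem_left _ _ hJ) hyx

end Jacobson

/-- Let `M` be a finite regular monoid and `k` a field such that
`|Γ_e|` is invertible in `k` for every idempotent `e ∈ M`.  If `u` lies in the Jacobson
radical of `A := MonoidAlgebra k M` and `s, t ∈ M` satisfy `MsM = MtM`, then `s·u·t`
lies in the `k`-linear span of `{ x ∈ MsM : MxM ≠ MsM }`. -/
theorem statement14 {M : Type*} [Monoid M] [Finite M]
    (hreg : ∀ s : M, ∃ t : M, s * t * s = s)
    {k : Type*} [Field k]
    (hk : ∀ e : M, e * e = e → IsUnit ((Nat.card ↥(unitSet e) : k)))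
    (u : MonoidAlgebra k M) (hu : u ∈ (⊥ : Ideal (MonoidAlgebra k M)).jacobson)
    (s t : M) (hst : MsM s = MsM t) :
    MonoidAlgebra.of k M s * u * MonoidAlgebra.of k M t ∈
      Submodule.span k (⇑(MonoidAlgebra.of k M) '' { x ∈ MsM s | MsM x ≠ MsM s }) := by
  obtain ⟨t₀, ht₀⟩ := hreg s
  obtain ⟨t₁, ht₁⟩ := hreg t
  have he : s * t₀ * (s * t₀) = s * t₀ := by rw [← mul_assoc, ht₀]
  have hf : t₁ * t * (t₁ * t) = t₁ * t := by rw [mul_assoc, ← mul_assoc t, ht₁]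
  have hsf : MsM s = MsM (t₁ * t) := hst.trans <| .symm <|
    MsM_eq_of_mem_of_mem ⟨t₁, 1, (mul_one _).symm⟩
      ⟨t, 1, by rw [mul_one, ← mul_assoc, ht₁]⟩
  have hsupp := of_mul_mul_of_mem_supported (k := k) s t u
  have hv : of k M s * u * of k M t ∈
      supported k k {m | s * t₀ * m = m ∧ m * (t₁ * t) = m} := by
    refine supported_mono ?_ hsupp
    rintro _ ⟨m, rfl⟩
    exact ⟨by simp only [← mul_assoc, ht₀],
      by rw [mul_assoc (s * m), ← mul_assoc t, ht₁]⟩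
  rw [span_of_image_eq_supported, mem_supported']
  intro x hx
  by_cases hxs : x ∈ MsM s
  · refine coeff_eq_zero_of_mem_jacobson he hf (hsf ▸ ⟨1, t₀, by rw [one_mul]⟩) (hk _ hf)
      (Ideal.mul_mem_right _ _ (Ideal.mul_mem_left _ _ hu)) hv ?_
    rw [← hsf]
    by_contra hxs'
    exact hx ⟨hxs, hxs'⟩
  · refine mem_supported'.1 (supported_mono ?_ hsupp) x hxs
    rintro _ ⟨m, rfl⟩
    exact ⟨1, m * t, by simp only [one_mul, mul_assoc]⟩
end
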